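/- For every integer n ≥ 2 and every integer k with 2^{n−2} ≤ k ≤ 2^{n−1}, θ(n,k) ≥ θ(n, 2^{n−2}). -/

import Mathlib

open Finset

/-- Two vertices of the hypercube `Q_n` are adjacent iff they differ in exactly one
coordinate. -/
def cubeEdge {n : ℕ} (u v : Fin n → Bool) : Prop :=
  (Finset.univ.filter (fun i => u i ≠ v i)).card = 1

instance {n : ℕ} (u v : Fin n → Bool) : Decidable (cubeEdge u v) := by
  unfold cubeEdge; infer_instance

/-- `θ(n,S)`: the number of edges of `Q_n` with exactly one endpoint in `S`. -/
def edgeBoundary (n : ℕ) (S : Finset (Fin n → Bool)) : ℕ :=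
  (Finset.univ.filter (fun p : (Fin n → Bool) × (Fin n → Bool) =>
    p.1 ∈ S ∧ p.2 ∉ S ∧ cubeEdge p.1 p.2)).card

/-- `θ(n,k) = min {θ(n,S) : S ⊆ V(Q_n), |S| = k}`. -/
noncomputable def thetaMin (n k : ℕ) : ℕ :=
  sInf {m | ∃ S : Finset (Fin n → Bool), S.card = k ∧ edgeBoundary n S = m}

/-- The half plane `{x : x_i = a}` of `Q_n`. -/
def halfPlane (n : ℕ) (i : Fin n) (a : Bool) : Finset (Fin n → Bool) :=
  Finset.univ.filter (fun x => x i = a)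

/-- `Type(S) = min_H |S ∩ H|`, minimum over the `2n` half planes of `Q_n`. -/
noncomputable def typeOf (n : ℕ) (S : Finset (Fin n → Bool)) : ℕ :=
  sInf {m | ∃ (i : Fin n) (a : Bool), (S ∩ halfPlane n i a).card = m}

/-- `θ(n,k,t) = min {θ(n,S) : |S| = k, Type(S) = t}`. -/
noncomputable def thetaMinType (n k t : ℕ) : ℕ :=
  sInf {m | ∃ S : Finset (Fin n → Bool),
    S.card = k ∧ typeOf n S = t ∧ edgeBoundary n S = m}

/-- Graph distance on the cycle `C_m` with vertices labelled by naturals. -/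
def cycleDist (m a b : ℕ) : ℕ := min (Nat.dist a b) (m - Nat.dist a b)

/-- The wirelength of an embedding `η` of `Q_n` into the cycle `C_{2^n}`:
the sum of cycle distances over all (unordered) edges of `Q_n`.  (The sum over
ordered pairs counts every edge twice, whence the division by `2`.) -/
def wirelength (n : ℕ) (η : (Fin n → Bool) → ℕ) : ℕ :=
  ((Finset.univ.filter (fun p : (Fin n → Bool) × (Fin n → Bool) =>
    cubeEdge p.1 p.2)).sum (fun p => cycleDist (2^n) (η p.1) (η p.2))) / 2

/-- The reflected Gray code embedding `ξ_n(x) = (y)_2 + 1`, where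
`y_i = (x_1 + ⋯ + x_i) mod 2`. -/
def xi (n : ℕ) (x : Fin n → Bool) : ℕ :=
  (Finset.univ.sum (fun i : Fin n =>
    ((Finset.univ.filter (fun j : Fin n => j ≤ i ∧ x j = true)).card % 2)
      * 2 ^ (n - 1 - (i : ℕ)))) + 1

/-- `f(x) = 3/4 − (64/7)(x − 1/2)²`. -/
noncomputable def fGuu (x : ℝ) : ℝ := 3/4 - 64/7 * (x - 1/2)^2

/-- `takDelta i` is `Δ_{i+1}`: `Δ_1(x) = 1/2 − |x − 1/2|`,
`Δ_{n}(x) = (1/2)Δ_{n−1}(2x − ⌊2x⌋)`. -/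
noncomputable def takDelta : ℕ → ℝ → ℝ
  | 0, x => 1/2 - |x - 1/2|
  | n+1, x => takDelta n (2*x - (⌊2*x⌋ : ℝ)) / 2

/-- `m_n(x) = Σ_{i=1}^n Δ_i(x)`, the n-th partial sum of the Takagi function. -/
noncomputable def mTakagi (n : ℕ) (x : ℝ) : ℝ := ∑ i ∈ Finset.range n, takDelta i x

/-- `y_N = ⌈2^N/24⌉ / 2^N`. -/
noncomputable def yGuu (N : ℕ) : ℝ := (⌈(2^N : ℝ)/24⌉ : ℝ) / 2^N

/-- `p_N = 1/2 − y_N`. -/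
noncomputable def pGuu (N : ℕ) : ℝ := 1/2 - yGuu N

/-- `g_{n,i,a}^{-1}(S)`, where `g_{n,i,a}` inserts the letter `a` at position `i`. -/
def gPre (n : ℕ) (i : Fin (n+1)) (a : Bool) (S : Finset (Fin (n+1) → Bool)) :
    Finset (Fin n → Bool) :=
  Finset.univ.filter (fun x => i.insertNth a x ∈ S)

/-!
The edge-isoperimetric inequality `θ(n,S) ≥ |S| (n − log₂ |S|)` is proved by induction on `n`:
splitting `S` along the first coordinate into `A, B ⊆ Q_{n-1}` gives
`θ(n,S) = θ(A) + θ(B) + |A \ B| + |B \ A|`, and the step reduces to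
`2 min(a,b) + a log₂ a + b log₂ b ≤ (a+b) log₂ (a+b)`, which follows from the concavity of `log`.
For `2^{n-2} ≤ |S| ≤ 2^{n-1}` the bound is at least `2^{n-1}` (concavity again), and this value
is attained by a subcube of codimension two.
-/

open Real

lemma mem_gPre_zero {n : ℕ} {a : Bool} {S : Finset (Fin (n + 1) → Bool)} {x : Fin n → Bool} :
    x ∈ gPre n 0 a S ↔ Fin.cons a x ∈ S := by
  simp [gPre, Fin.insertNth_zero']

lemma sum_cube_succ {n : ℕ} {M : Type*} [AddCommMonoid M] (f : (Fin (n + 1) → Bool) → M) :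
    ∑ u, f u = ∑ x, f (Fin.cons false x) + ∑ x, f (Fin.cons true x) := by
  rw [← (Fin.consEquiv fun _ => Bool).sum_comp, Fintype.sum_prod_type, Fintype.sum_bool, add_comm]
  rfl

lemma cubeEdge_cons_cons_self {n : ℕ} (a : Bool) (x y : Fin n → Bool) :
    cubeEdge (Fin.cons a x) (Fin.cons a y) ↔ cubeEdge x y := by
  simp [cubeEdge, Finset.card_filter, Fin.sum_univ_succ]

lemma cubeEdge_cons_cons_of_ne {n : ℕ} {a b : Bool} (hab : a ≠ b) (x y : Fin n → Bool) :
    cubeEdge (Fin.cons a x) (Fin.cons b y) ↔ x = y := by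
  simp [cubeEdge, Finset.card_filter, Fin.sum_univ_succ, hab, funext_iff]

lemma edgeBoundary_eq_sum (n : ℕ) (S : Finset (Fin n → Bool)) :
    edgeBoundary n S = ∑ u, ∑ v, if u ∈ S ∧ v ∉ S ∧ cubeEdge u v then 1 else 0 := by
  rw [edgeBoundary, Finset.card_filter, Fintype.sum_prod_type]

lemma edgeBoundary_empty (n : ℕ) : edgeBoundary n ∅ = 0 := by
  simp [edgeBoundary]

lemma edgeBoundary_univ (n : ℕ) : edgeBoundary n univ = 0 := by
  simp [edgeBoundary]

lemma sum_sum_ite_eq_card_sdiff {α : Type*} [Fintype α] [DecidableEq α] (P Q : Finset α) :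
    ∑ x, ∑ y, (if x ∈ P ∧ y ∉ Q ∧ x = y then 1 else 0) = #(P \ Q) := by
  rw [card_eq_sum_ones, ← filter_univ_mem (P \ Q), sum_filter]
  refine Fintype.sum_congr _ _ fun x => ?_
  rw [Fintype.sum_eq_single x (by grind)]
  simp

lemma edgeBoundary_succ (n : ℕ) (S : Finset (Fin (n + 1) → Bool)) :
    edgeBoundary (n + 1) S = edgeBoundary n (gPre n 0 false S) + edgeBoundary n (gPre n 0 true S)
      + #(gPre n 0 false S \ gPre n 0 true S) + #(gPre n 0 true S \ gPre n 0 false S) := by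
  simp only [edgeBoundary_eq_sum, sum_cube_succ, Finset.sum_add_distrib, ← mem_gPre_zero,
    cubeEdge_cons_cons_self, cubeEdge_cons_cons_of_ne Bool.false_ne_true,
    cubeEdge_cons_cons_of_ne Bool.false_ne_true.symm, sum_sum_ite_eq_card_sdiff]
  ring

lemma card_gPre_add_card_gPre (n : ℕ) (S : Finset (Fin (n + 1) → Bool)) :
    #(gPre n 0 false S) + #(gPre n 0 true S) = #S := by
  have : #S = ∑ u, if u ∈ S then 1 else 0 := by simp
  rw [this, sum_cube_succ, gPre, gPre, card_filter, card_filter]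
  simp only [Fin.insertNth_zero']

lemma sub_one_le_logb_two {t : ℝ} (h1 : 1 ≤ t) (h2 : t ≤ 2) : t - 1 ≤ logb 2 t := by
  have hconc := strictConcaveOn_log_Ioi.concaveOn.2 (Set.mem_Ioi.2 one_pos)
    (Set.mem_Ioi.2 two_pos) (by linarith : (0 : ℝ) ≤ 2 - t) (by linarith : (0 : ℝ) ≤ t - 1)
    (by ring)
  simp only [smul_eq_mul, log_one, mul_zero, zero_add] at hconc
  rw [logb, le_div_iff₀ (log_pos one_lt_two)]
  convert hconc using 2
  ring

lemma two_mul_add_mul_logb_add_mul_logb_le {a b : ℝ} (ha : 0 ≤ a) (hab : a ≤ b) :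
    2 * a + a * logb 2 a + b * logb 2 b ≤ (a + b) * logb 2 (a + b) := by
  rcases ha.eq_or_lt with rfl | ha
  · simp
  have hb : 0 < b := ha.trans_le hab
  have hlog_double : 1 + logb 2 a ≤ logb 2 (a + b) := by
    calc 1 + logb 2 a = logb 2 (2 * a) := by
          rw [logb_mul two_ne_zero ha.ne', logb_self_eq_one one_lt_two]
      _ ≤ logb 2 (a + b) := logb_le_logb_of_le one_lt_two (by positivity) (by linarith)
  have hchord : a / b ≤ logb 2 (a + b) - logb 2 b := by
    have h := sub_one_le_logb_two (t := (a + b) / b) (by rw [le_div_iff₀ hb]; linarith)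
      (by rw [div_le_iff₀ hb]; linarith)
    rwa [logb_div (by positivity) hb.ne', add_div, div_self hb.ne', add_sub_cancel_right] at h
  rw [div_le_iff₀' hb] at hchord
  linarith [mul_le_mul_of_nonneg_left hlog_double ha.le]

lemma two_mul_min_add_mul_logb_add_mul_logb_le {a b : ℝ} (ha : 0 ≤ a) (hb : 0 ≤ b) :
    2 * min a b + a * logb 2 a + b * logb 2 b ≤ (a + b) * logb 2 (a + b) := by
  rcases le_total a b with hab | hba
  · rw [min_eq_left hab]
    exact two_mul_add_mul_logb_add_mul_logb_le ha hab
  · rw [min_eq_right hba, add_comm a b, add_right_comm]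
    exact two_mul_add_mul_logb_add_mul_logb_le hb hba

lemma card_add_card_le_two_mul_min_add_card_sdiff_add_card_sdiff {α : Type*} [DecidableEq α]
    (A B : Finset α) : #A + #B ≤ 2 * min #A #B + #(A \ B) + #(B \ A) := by
  have hA := card_sdiff_add_card_inter A B
  have hB := card_sdiff_add_card_inter B A
  rw [inter_comm] at hB
  omega

theorem card_mul_sub_logb_card_le_edgeBoundary (n : ℕ) (S : Finset (Fin n → Bool)) :
    #S * (n - logb 2 #S) ≤ (edgeBoundary n S : ℝ) := by
  induction n with
  | zero =>
    have : #S ≤ 1 := by simpa using card_le_univ S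
    interval_cases h : #S <;> simp
  | succ n ih =>
    set A := gPre n 0 false S
    set B := gPre n 0 true S
    have hsplit : (#A + #B : ℝ) - 2 * min (#A : ℝ) #B ≤ #(A \ B) + #(B \ A) := by
      have := card_add_card_le_two_mul_min_add_card_sdiff_add_card_sdiff A B
      rw [← Nat.cast_le (α := ℝ)] at this
      push_cast at this
      linarith
    have hkey := two_mul_min_add_mul_logb_add_mul_logb_le (Nat.cast_nonneg #A) (Nat.cast_nonneg #B)
    rw [← card_gPre_add_card_gPre, edgeBoundary_succ]
    push_cast
    linarith [ih A, ih B]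

lemma two_pow_succ_le_mul_sub_logb {m : ℕ} {x : ℝ} (h1 : 2 ^ m ≤ x) (h2 : x ≤ 2 ^ (m + 1)) :
    2 ^ (m + 1) ≤ x * (m + 2 - logb 2 x) := by
  have hx : 0 < x := lt_of_lt_of_le (by positivity) h1
  set t := 2 ^ (m + 1) / x
  have ht1 : 1 ≤ t := by rw [le_div_iff₀ hx]; linarith
  have ht2 : t ≤ 2 := by rw [div_le_iff₀ hx, pow_succ]; linarith
  have hlog : logb 2 x = m + 1 - logb 2 t := by
    rw [logb_div (by positivity) hx.ne', logb_pow, logb_self_eq_one one_lt_two]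
    push_cast
    ring
  calc (2 : ℝ) ^ (m + 1) = x * t := by simp only [t]; field_simp
    _ ≤ x * (1 + logb 2 t) := by gcongr; linarith [sub_one_le_logb_two ht1 ht2]
    _ = x * (m + 2 - logb 2 x) := by rw [hlog]; ring

theorem two_pow_succ_le_edgeBoundary {m : ℕ} {S : Finset (Fin (m + 2) → Bool)}
    (h1 : 2 ^ m ≤ #S) (h2 : #S ≤ 2 ^ (m + 1)) : 2 ^ (m + 1) ≤ edgeBoundary (m + 2) S := by
  have hiso := card_mul_sub_logb_card_le_edgeBoundary (m + 2) S
  have hbound := two_pow_succ_le_mul_sub_logb (m := m) (x := #S) (by exact_mod_cast h1)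
    (by exact_mod_cast h2)
  push_cast at hiso
  exact_mod_cast hbound.trans hiso

lemma edgeBoundary_succ_of_gPre_true_eq_empty {n : ℕ} {S : Finset (Fin (n + 1) → Bool)}
    (h : gPre n 0 true S = ∅) :
    edgeBoundary (n + 1) S = edgeBoundary n (gPre n 0 false S) + #(gPre n 0 false S) := by
  simp [edgeBoundary_succ, h, edgeBoundary_empty]

lemma card_of_gPre_true_eq_empty {n : ℕ} {S : Finset (Fin (n + 1) → Bool)}
    (h : gPre n 0 true S = ∅) : #S = #(gPre n 0 false S) := by
  simp [← card_gPre_add_card_gPre, h]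

lemma gPre_halfPlane_zero (n : ℕ) (a b : Bool) :
    gPre n 0 a (halfPlane (n + 1) 0 b) = if a = b then univ else ∅ := by
  ext x
  by_cases h : a = b <;> simp [mem_gPre_zero, halfPlane, h]

lemma gPre_halfPlane_zero_inter_halfPlane_one (n : ℕ) (a b c : Bool) :
    gPre (n + 1) 0 a (halfPlane (n + 2) 0 b ∩ halfPlane (n + 2) 1 c) =
      if a = b then halfPlane (n + 1) 0 c else ∅ := by
  ext x
  by_cases h : a = b <;> simp [mem_gPre_zero, halfPlane, Fin.cons_one, h]

lemma card_halfPlane_zero (n : ℕ) : #(halfPlane (n + 1) 0 false) = 2 ^ n := by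
  rw [card_of_gPre_true_eq_empty (by simp [gPre_halfPlane_zero]), gPre_halfPlane_zero]
  simp

lemma edgeBoundary_halfPlane_zero (n : ℕ) :
    edgeBoundary (n + 1) (halfPlane (n + 1) 0 false) = 2 ^ n := by
  rw [edgeBoundary_succ_of_gPre_true_eq_empty (by simp [gPre_halfPlane_zero]),
    gPre_halfPlane_zero]
  simp [edgeBoundary_univ]

lemma card_halfPlane_zero_inter_halfPlane_one (n : ℕ) :
    #(halfPlane (n + 2) 0 false ∩ halfPlane (n + 2) 1 false) = 2 ^ n := by
  rw [card_of_gPre_true_eq_empty (by simp [gPre_halfPlane_zero_inter_halfPlane_one]),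
    gPre_halfPlane_zero_inter_halfPlane_one, if_pos rfl, card_halfPlane_zero]

lemma edgeBoundary_halfPlane_zero_inter_halfPlane_one (n : ℕ) :
    edgeBoundary (n + 2) (halfPlane (n + 2) 0 false ∩ halfPlane (n + 2) 1 false) =
      2 ^ (n + 1) := by
  rw [edgeBoundary_succ_of_gPre_true_eq_empty (by simp [gPre_halfPlane_zero_inter_halfPlane_one]),
    gPre_halfPlane_zero_inter_halfPlane_one, if_pos rfl, edgeBoundary_halfPlane_zero,
    card_halfPlane_zero, pow_succ, mul_two]

lemma thetaMin_card_le_edgeBoundary {n : ℕ} (S : Finset (Fin n → Bool)) :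
    thetaMin n #S ≤ edgeBoundary n S :=
  Nat.sInf_le ⟨S, rfl, rfl⟩

lemma le_thetaMin {n k b : ℕ} (hk : k ≤ 2 ^ n)
    (h : ∀ S : Finset (Fin n → Bool), #S = k → b ≤ edgeBoundary n S) :
    b ≤ thetaMin n k := by
  obtain ⟨T, -, hT⟩ :=
    exists_subset_card_eq (s := (univ : Finset (Fin n → Bool))) (by simpa using hk)
  exact le_csInf ⟨_, T, hT, rfl⟩ (by rintro _ ⟨S, hS, rfl⟩; exact h S hS)

/-- Guu, Claim 11. For `2^{n−2} ≤ k ≤ 2^{n−1}`,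
`θ(n,k) ≥ θ(n,2^{n−2})`. -/
theorem theta_ge_quarter (n k : ℕ) (hn : 2 ≤ n)
    (hk1 : 2^(n-2) ≤ k) (hk2 : k ≤ 2^(n-1)) :
    thetaMin n k ≥ thetaMin n (2^(n-2)) := by
  obtain ⟨m, rfl⟩ : ∃ m, n = m + 2 := ⟨n - 2, by omega⟩
  rw [Nat.add_sub_cancel] at hk1 ⊢
  rw [show m + 2 - 1 = m + 1 by omega] at hk2
  calc thetaMin (m + 2) (2 ^ m)
      ≤ edgeBoundary (m + 2) (halfPlane (m + 2) 0 false ∩ halfPlane (m + 2) 1 false) := by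
        rw [← card_halfPlane_zero_inter_halfPlane_one m]
        exact thetaMin_card_le_edgeBoundary _
    _ = 2 ^ (m + 1) := edgeBoundary_halfPlane_zero_inter_halfPlane_one m
    _ ≤ thetaMin (m + 2) k :=
        le_thetaMin (hk2.trans (Nat.pow_le_pow_right two_pos (by omega)))
          fun S hS => two_pow_succ_le_edgeBoundary (hS ▸ hk1) (hS ▸ hk2)
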